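/- Suppose φ satisfies Assumption (A). Then ∫_{ℝ^d} φ⁻(|x|) dx < ∞ and lim_{a→0} a^d · v₀(a) = ∫_{ℝ^d} φ⁻(|x|) dx. -/

import Mathlib

open MeasureTheory Filter Topology Set
open scoped BigOperators ENNReal NNReal

noncomputable section

attribute [local instance] Classical.propDecidable

/-- Points of `ℝ^d` (Euclidean space). -/
abbrev Pt (d : ℕ) : Type := EuclideanSpace ℝ (Fin d)

/-- The index `r ∈ ℤ^d` of the cube `Δ_a(r)` of the partition `Δ̄_a` containing `x`:
for `a > 0` we have `cubeIdx d a x = r ↔ ∀ i, a*(r i - 1/2) ≤ x i ∧ x i < a*(r i + 1/2)`. -/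
def cubeIdx (d : ℕ) (a : ℝ) (x : Pt d) : Fin d → ℤ := fun i => ⌊x i / a + 1/2⌋

/-- `φ⁺(t) = max {0, φ(t)}`. -/
def phiPlus (φ : ℝ → ℝ) (t : ℝ) : ℝ := max (φ t) 0

/-- `φ⁻(t) = -min {0, φ(t)}`. -/
def phiMinus (φ : ℝ → ℝ) (t : ℝ) : ℝ := max (-(φ t)) 0

/-- Energy `U(γ) = Σ_{{x,y}⊂γ} φ(|x-y|)` of a finite configuration. -/
def energy (d : ℕ) (φ : ℝ → ℝ) (γ : Finset (Pt d)) : ℝ :=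
  (∑ p ∈ γ.offDiag, φ (dist p.1 p.2)) / 2

/-- Interaction energy `W(η;γ) = Σ_{x∈η} Σ_{y∈γ} φ(|x-y|)`. -/
def interW (d : ℕ) (φ : ℝ → ℝ) (η γ : Finset (Pt d)) : ℝ :=
  ∑ x ∈ η, ∑ y ∈ γ, φ (dist x y)

/-- Number of points of `γ` in the cube `Δ_a(r)`, i.e. `|γ_Δ|`. -/
def cubeCount (d : ℕ) (a : ℝ) (γ : Finset (Pt d)) (r : Fin d → ℤ) : ℕ :=
  (γ.filter fun x => cubeIdx d a x = r).card

/-- `Σ_{Δ ∈ Δ̄_a : |γ_Δ| ≥ 2} |γ_Δ|²`. -/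
def densSum (d : ℕ) (a : ℝ) (γ : Finset (Pt d)) : ℝ :=
  ∑ r ∈ γ.image (cubeIdx d a),
    if 2 ≤ cubeCount d a γ r then (cubeCount d a γ r : ℝ) ^ 2 else 0

/-- `b(a) = inf {φ⁺(|x-y|) : x ≠ y lie in one common cube of Δ̄_a}`. -/
def bVal (d : ℕ) (φ : ℝ → ℝ) (a : ℝ) : ℝ :=
  sInf {t : ℝ | ∃ x y : Pt d, x ≠ y ∧ cubeIdx d a x = cubeIdx d a y ∧ t = phiPlus φ (dist x y)}

/-- `v₀(a) = Σ_{Δ'∈Δ̄_a} sup_{x∈Δ₀} sup_{y∈Δ'} φ⁻(|x-y|)` (valued in `ℝ≥0∞`). -/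
def v0E (d : ℕ) (φ : ℝ → ℝ) (a : ℝ) : ℝ≥0∞ :=
  ∑' r : Fin d → ℤ,
    ⨆ x ∈ {x : Pt d | cubeIdx d a x = 0}, ⨆ y ∈ {y : Pt d | cubeIdx d a y = r},
      ENNReal.ofReal (phiMinus φ (dist x y))

/-- Real value of `v₀(a)`. -/
def v0Val (d : ℕ) (φ : ℝ → ℝ) (a : ℝ) : ℝ := (v0E d φ a).toReal

/-- Assumption (A) on the interaction potential. -/
structure AssumptionA (d : ℕ) (φ : ℝ → ℝ) (r₀ R φ₀ φ₁ ε₀ s : ℝ) : Prop where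
  cont : ContinuousOn φ (Set.Ioi (0 : ℝ))
  r0_pos : 0 < r₀
  R_gt : r₀ < R
  phi0_pos : 0 < φ₀
  phi1_pos : 0 < φ₁
  eps0_pos : 0 < ε₀
  s_ge : (d : ℝ) ≤ s
  decay : ∀ t : ℝ, R ≤ t → -(φ₁ / t ^ ((d : ℝ) + ε₀)) ≤ φ t
  core : ∀ t : ℝ, 0 < t → t ≤ r₀ → φ₀ / t ^ s ≤ φ t

/-- `χ₋^a(γ) = 1` iff no cube of `Δ̄_a` contains two or more points of `γ`. -/
def chiM (d : ℕ) (a : ℝ) (γ : Finset (Pt d)) : ℝ :=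
  if ∀ x ∈ γ, ∀ y ∈ γ, cubeIdx d a x = cubeIdx d a y → x = y then 1 else 0

/-- The finite configuration `{y₁,…,y_n}`. -/
def confOf {d n : ℕ} (y : Fin n → Pt d) : Finset (Pt d) := Finset.image y Finset.univ

/-- Weighted grand partition function `1 + Σ_{n≥1} (zⁿ/n!) ∫_{Λⁿ} e^{-βU({x₁,…,xₙ})} w({x₁,…,xₙ})`. -/
def ZW (d : ℕ) (φ : ℝ → ℝ) (z β : ℝ) (Λ : Set (Pt d)) (w : Finset (Pt d) → ℝ) : ℝ :=
  1 + ∑' n : ℕ, (z ^ (n + 1) / (n + 1).factorial) *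
    ∫ y in {y : Fin (n + 1) → Pt d | ∀ i, y i ∈ Λ},
      Real.exp (-β * energy d φ (confOf y)) * w (confOf y)

/-- Grand partition function `Z_Λ(z,β)`. -/
def ZΛ (d : ℕ) (φ : ℝ → ℝ) (z β : ℝ) (Λ : Set (Pt d)) : ℝ := ZW d φ z β Λ fun _ => 1

/-- Dilute (quasi-lattice approximated) partition function `Z_Λ^{(-)}(z,β,a)`. -/
def ZΛm (d : ℕ) (φ : ℝ → ℝ) (z β a : ℝ) (Λ : Set (Pt d)) : ℝ := ZW d φ z β Λ (chiM d a)

/-- `Σ_{n≥0} (zⁿ/n!) ∫_{Λⁿ} e^{-βU(η∪{y₁,…,y_n})} w(η∪{y₁,…,y_n})`. -/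
def corrInt (d : ℕ) (φ : ℝ → ℝ) (z β : ℝ) (Λ : Set (Pt d)) (η : Finset (Pt d))
    (w : Finset (Pt d) → ℝ) : ℝ :=
  Real.exp (-β * energy d φ η) * w η +
  ∑' n : ℕ, (z ^ (n + 1) / (n + 1).factorial) *
    ∫ y in {y : Fin (n + 1) → Pt d | ∀ i, y i ∈ Λ},
      Real.exp (-β * energy d φ (η ∪ confOf y)) * w (η ∪ confOf y)

/-- Finite-volume correlation function `ρ_Λ(η;z,β)`. -/
def rhoΛ (d : ℕ) (φ : ℝ → ℝ) (z β : ℝ) (Λ : Set (Pt d)) (η : Finset (Pt d)) : ℝ :=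
  z ^ η.card / ZΛ d φ z β Λ * corrInt d φ z β Λ η fun _ => 1

/-- Approximated correlation function `ρ_Λ^{(-)}(η;z,β,a)`. -/
def rhoΛm (d : ℕ) (φ : ℝ → ℝ) (z β a : ℝ) (Λ : Set (Pt d)) (η : Finset (Pt d)) : ℝ :=
  z ^ η.card / ZΛm d φ z β a Λ * corrInt d φ z β Λ η (chiM d a)

/-- `ε₁(a)`. -/
def eps1 (d : ℕ) (φ : ℝ → ℝ) (z β a : ℝ) : ℝ :=
  1/2 * z^2 * a^(2*d) * Real.exp (-β * (bVal d φ a - 5 * v0Val d φ a)) *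
    Real.exp (z * a^d * Real.exp (-β * (bVal d φ a - 3 * v0Val d φ a)))

/-- The cube `[-L/2, L/2)^d`. -/
def boxHalf (d : ℕ) (L : ℝ) : Set (Pt d) := {x | ∀ i, -(L/2) ≤ x i ∧ x i < L/2}

/-- The cube `Λ_l = [-a(l+1/2), a(l+1/2))^d`, a union of cubes of `Δ̄_a`. -/
def boxLat (d : ℕ) (a : ℝ) (l : ℕ) : Set (Pt d) :=
  {x | ∀ i, -(a*(l+1/2)) ≤ x i ∧ x i < a*(l+1/2)}

/-!
The step function `x ↦ sup {φ⁻(|x' - y|) : x' ∈ Δ_a(0), y in the cube of x}` has integral `a^d v₀(a)`,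
since each cube has volume `a^d`. Every distance in that supremum is within `2√d a` of `|x|`, and
`φ⁻` is upper semicontinuous on `[0, ∞)` (continuous on `(0, ∞)`, zero on `(0, r₀]`), so the step
functions converge pointwise to `φ⁻(|x|)` as `a → 0`, which is also a lower bound for them. The decay
`φ⁻(t) ≤ φ₁ t^{-(d+ε₀)}` yields the integrable majorant `K (1 + |x|)^{-(d+ε₀)}`, and dominated
convergence concludes.
-/

lemma rpow_neg_le_mul_rpow_neg {x y c p : ℝ} (hx : 0 < x) (hc : 0 < c) (hxy : x ≤ c * y)
    (hp : 0 ≤ p) : y ^ (-p) ≤ c ^ p * x ^ (-p) := by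
  have hy : 0 < y := pos_of_mul_pos_right (hx.trans_le hxy) hc.le
  calc y ^ (-p) = c ^ p * (c * y) ^ (-p) := by
        rw [Real.mul_rpow hc.le hy.le, ← mul_assoc, ← Real.rpow_add hc, add_neg_cancel,
          Real.rpow_zero, one_mul]
    _ ≤ c ^ p * x ^ (-p) := mul_le_mul_of_nonneg_left
        (Real.rpow_le_rpow_of_nonpos hx hxy (neg_nonpos.2 hp)) (by positivity)

lemma eventually_mul_lt_nhdsGT (c : ℝ) {δ : ℝ} (hδ : 0 < δ) :
    ∀ᶠ a in 𝓝[>] (0 : ℝ), c * a < δ :=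
  nhdsWithin_le_nhds <| ((continuous_const_mul c).tendsto' 0 0 (mul_zero c)).eventually
    (gt_mem_nhds hδ)

lemma EuclideanSpace.norm_le_sqrt_card_mul {ι : Type*} [Fintype ι] (x : EuclideanSpace ℝ ι)
    {c : ℝ} (hc : 0 ≤ c) (h : ∀ i, |x i| ≤ c) : ‖x‖ ≤ √(Fintype.card ι) * c := by
  rw [EuclideanSpace.norm_eq, ← Real.sqrt_sq hc, ← Real.sqrt_mul (Nat.cast_nonneg _)]
  gcongr
  calc ∑ i, ‖x i‖ ^ 2 ≤ ∑ _i : ι, c ^ 2 := by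
        gcongr with i
        exact h i
    _ = Fintype.card ι * c ^ 2 := by simp

lemma phiMinus_nonneg (φ : ℝ → ℝ) (t : ℝ) : 0 ≤ phiMinus φ t := le_max_right _ _

section Cubes

variable {d : ℕ} {a : ℝ}

lemma cubeIdx_eq_iff (ha : 0 < a) (x : Pt d) (r : Fin d → ℤ) :
    cubeIdx d a x = r ↔ ∀ i, x i ∈ Ico (a * (r i - 1/2)) (a * (r i + 1/2)) := by
  simp only [funext_iff, cubeIdx, Int.floor_eq_iff, mem_Ico]
  refine forall_congr' fun i => ?_
  rw [mul_comm a, mul_comm a, ← le_div_iff₀ ha, ← div_lt_iff₀ ha]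
  constructor <;> rintro ⟨h₁, h₂⟩ <;> constructor <;> linarith

lemma cubeIdx_zero : cubeIdx d a 0 = 0 := by
  ext i
  norm_num [cubeIdx]

lemma measurable_cubeIdx (d : ℕ) (a : ℝ) : Measurable (cubeIdx d a) := by
  refine measurable_pi_lambda _ fun i => Int.measurable_floor.comp ?_
  exact (((measurable_pi_apply i).comp
    (MeasurableEquiv.toLp 2 (Fin d → ℝ)).symm.measurable).div_const a).add_const _

lemma volume_cubeIdx_preimage (ha : 0 < a) (r : Fin d → ℤ) :
    volume (cubeIdx d a ⁻¹' {r}) = ENNReal.ofReal (a ^ d) := by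
  have hcube : cubeIdx d a ⁻¹' {r} = (MeasurableEquiv.toLp 2 (Fin d → ℝ)).symm ⁻¹'
      univ.pi fun i => Ico (a * (r i - 1/2)) (a * (r i + 1/2)) := by
    ext x
    simp only [mem_preimage, mem_singleton_iff, cubeIdx_eq_iff ha, mem_univ_pi]
    rfl
  rw [hcube, (EuclideanSpace.volume_preserving_symm_measurableEquiv_toLp (Fin d)).measure_preimage
    (MeasurableSet.univ_pi fun _ => measurableSet_Ico).nullMeasurableSet, volume_pi_pi]
  have hside : ∀ i, a * (r i + 1/2) - a * (r i - 1/2) = a := fun i => by ring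
  simp only [Real.volume_Ico, hside, Finset.prod_const, Finset.card_univ, Fintype.card_fin,
    ENNReal.ofReal_pow ha.le]

lemma dist_le_of_cubeIdx_eq (ha : 0 < a) {x y : Pt d} (h : cubeIdx d a x = cubeIdx d a y) :
    dist x y ≤ √d * a := by
  rw [dist_eq_norm]
  simpa using EuclideanSpace.norm_le_sqrt_card_mul (x - y) ha.le fun i => by
    have hi := Int.abs_sub_lt_one_of_floor_eq_floor (congrFun h i)
    rw [add_sub_add_right_eq_sub, ← sub_div, abs_div, abs_of_pos ha, div_lt_one ha] at hi
    exact hi.le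

lemma abs_dist_sub_norm_le (ha : 0 < a) {x x' y : Pt d} (hx' : cubeIdx d a x' = 0)
    (hy : cubeIdx d a y = cubeIdx d a x) : |dist x' y - ‖x‖| ≤ 2 * √d * a :=
  calc |dist x' y - ‖x‖| = dist (dist x' y) (dist 0 x) := by rw [Real.dist_eq, dist_zero_left]
    _ ≤ dist x' 0 + dist y x := dist_dist_dist_le _ _ _ _
    _ ≤ √d * a + √d * a := add_le_add
        (dist_le_of_cubeIdx_eq ha (hx'.trans cubeIdx_zero.symm)) (dist_le_of_cubeIdx_eq ha hy)
    _ = 2 * √d * a := by ring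

end Cubes

section StepFunction

variable {d : ℕ} {φ : ℝ → ℝ} {a : ℝ}

def v0Summand (d : ℕ) (φ : ℝ → ℝ) (a : ℝ) (r : Fin d → ℤ) : ℝ≥0∞ :=
  ⨆ x ∈ {x : Pt d | cubeIdx d a x = 0}, ⨆ y ∈ {y : Pt d | cubeIdx d a y = r},
    ENNReal.ofReal (phiMinus φ (dist x y))

def v0Step (d : ℕ) (φ : ℝ → ℝ) (a : ℝ) (x : Pt d) : ℝ≥0∞ := v0Summand d φ a (cubeIdx d a x)

lemma measurable_v0Step (d : ℕ) (φ : ℝ → ℝ) (a : ℝ) : Measurable (v0Step d φ a) :=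
  (measurable_of_countable _).comp (measurable_cubeIdx d a)

lemma lintegral_v0Step (ha : 0 < a) :
    ∫⁻ x, v0Step d φ a x = ENNReal.ofReal (a ^ d) * v0E d φ a :=
  calc ∫⁻ x, v0Step d φ a x = ∫⁻ r, v0Summand d φ a r ∂volume.map (cubeIdx d a) :=
        (lintegral_map (measurable_of_countable _) (measurable_cubeIdx d a)).symm
    _ = ∑' r, v0Summand d φ a r * ENNReal.ofReal (a ^ d) := by
        rw [lintegral_countable']
        refine tsum_congr fun r => ?_
        rw [Measure.map_apply (measurable_cubeIdx d a) (measurableSet_singleton r),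
          volume_cubeIdx_preimage ha]
    _ = ENNReal.ofReal (a ^ d) * v0E d φ a := by rw [ENNReal.tsum_mul_right, mul_comm]; rfl

lemma ofReal_phiMinus_le_v0Step (a : ℝ) (x : Pt d) :
    ENNReal.ofReal (phiMinus φ ‖x‖) ≤ v0Step d φ a x :=
  le_iSup₂_of_le 0 cubeIdx_zero <| le_iSup₂_of_le x rfl <| by rw [dist_zero_left]

lemma v0Step_le_ofReal (ha : 0 < a) {x : Pt d} {b : ℝ}
    (h : ∀ t, 0 ≤ t → |t - ‖x‖| ≤ 2 * √d * a → phiMinus φ t ≤ b) :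
    v0Step d φ a x ≤ ENNReal.ofReal b :=
  iSup₂_le fun _ hx' => iSup₂_le fun _ hy =>
    ENNReal.ofReal_le_ofReal (h _ dist_nonneg (abs_dist_sub_norm_le ha hx' hy))

lemma tendsto_v0Step {x : Pt d} (hφ : UpperSemicontinuousWithinAt (phiMinus φ) (Ici 0) ‖x‖) :
    Tendsto (fun a => v0Step d φ a x) (𝓝[>] 0) (𝓝 (ENNReal.ofReal (phiMinus φ ‖x‖))) := by
  refine tendsto_order.2 ⟨fun b hb => Eventually.of_forall fun a =>
    hb.trans_le (ofReal_phiMinus_le_v0Step a x), fun b hb => ?_⟩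
  obtain ⟨r, -, hxr, hrb⟩ := ENNReal.lt_iff_exists_real_btwn.1 hb
  obtain ⟨δ, hδ, hball⟩ :=
    Metric.mem_nhdsWithin_iff.1 (hφ r (ENNReal.ofReal_lt_ofReal_iff'.1 hxr).1)
  filter_upwards [self_mem_nhdsWithin, eventually_mul_lt_nhdsGT (2 * √d) hδ] with a ha haδ
  refine (v0Step_le_ofReal ha fun t ht htx => (hball ⟨?_, ht⟩).le).trans_lt hrb
  rw [Metric.mem_ball, Real.dist_eq]
  exact htx.trans_lt haδ

end StepFunction

namespace AssumptionA

variable {d : ℕ} {φ : ℝ → ℝ} {r₀ R φ₀ φ₁ ε₀ s : ℝ}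

lemma phiMinus_eq_zero (hA : AssumptionA d φ r₀ R φ₀ φ₁ ε₀ s) {t : ℝ} (ht : 0 < t)
    (htr : t ≤ r₀) : phiMinus φ t = 0 := by
  have hφ : 0 < φ t := (div_pos hA.phi0_pos (Real.rpow_pos_of_pos ht s)).trans_le (hA.core t ht htr)
  exact max_eq_right (by linarith)

lemma upperSemicontinuousOn_phiMinus (hA : AssumptionA d φ r₀ R φ₀ φ₁ ε₀ s) :
    UpperSemicontinuousOn (phiMinus φ) (Ici 0) := by
  intro t ht
  rcases (mem_Ici.1 ht).eq_or_lt with rfl | htpos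
  · intro y hy
    filter_upwards [inter_mem_nhdsWithin (Ici 0) (Iio_mem_nhds hA.r0_pos)] with u ⟨hu, hur⟩
    rcases (mem_Ici.1 hu).eq_or_lt with rfl | hupos
    · exact hy
    · rw [hA.phiMinus_eq_zero hupos (le_of_lt hur)]
      exact (phiMinus_nonneg φ 0).trans_lt hy
  · have hcont : ContinuousAt (phiMinus φ) t :=
      ((hA.cont.continuousAt (Ioi_mem_nhds htpos)).neg).max continuousAt_const
    exact hcont.continuousWithinAt.upperSemicontinuousWithinAt

lemma exists_phiMinus_le (hA : AssumptionA d φ r₀ R φ₀ φ₁ ε₀ s) :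
    ∃ K, 0 ≤ K ∧ ∀ t, 0 ≤ t → phiMinus φ t ≤ K * (1 + t) ^ (-((d : ℝ) + ε₀)) := by
  set p : ℝ := d + ε₀
  have hp : 0 ≤ p := by have := hA.eps0_pos; positivity
  have hR : 0 < R := hA.r0_pos.trans hA.R_gt
  obtain ⟨t₀, -, ht₀⟩ := (hA.upperSemicontinuousOn_phiMinus.mono Icc_subset_Ici_self).exists_isMaxOn
    (nonempty_Icc.2 hR.le) isCompact_Icc
  have hmax_nonneg := phiMinus_nonneg φ t₀
  refine ⟨max (phiMinus φ t₀ * (1 + R) ^ p) (φ₁ * ((1 + R) / R) ^ p),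
    le_max_of_le_left (by positivity), fun t ht => ?_⟩
  rcases le_total t R with htR | hRt
  · calc phiMinus φ t ≤ phiMinus φ t₀ * 1 ^ (-p) := by simpa using ht₀ ⟨ht, htR⟩
      _ ≤ phiMinus φ t₀ * ((1 + R) ^ p * (1 + t) ^ (-p)) := by
          gcongr
          exact rpow_neg_le_mul_rpow_neg (by positivity) (by positivity) (by linarith) hp
      _ ≤ _ := by
          rw [← mul_assoc]
          gcongr
          exact le_max_left _ _
  · have ht : 0 < t := hR.trans_le hRt
    calc phiMinus φ t ≤ φ₁ * t ^ (-p) := by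
          rw [Real.rpow_neg ht.le, ← div_eq_mul_inv]
          exact max_le (neg_le.2 (hA.decay t hRt)) (div_pos hA.phi1_pos (by positivity)).le
      _ ≤ φ₁ * (((1 + R) / R) ^ p * (1 + t) ^ (-p)) := by
          gcongr
          · exact hA.phi1_pos.le
          refine rpow_neg_le_mul_rpow_neg (by positivity) (by positivity) ?_ hp
          rw [div_mul_eq_mul_div, le_div_iff₀ hR]
          nlinarith
      _ ≤ _ := by
          rw [← mul_assoc]
          gcongr
          exact le_max_right _ _

end AssumptionA

theorem v0_asymptotics_general (d : ℕ) (φ : ℝ → ℝ)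
    (r₀ R φ₀ φ₁ ε₀ s : ℝ) (hA : AssumptionA d φ r₀ R φ₀ φ₁ ε₀ s) :
    Integrable (fun x : Pt d => phiMinus φ ‖x‖) ∧
    Tendsto (fun a : ℝ => a ^ d * v0Val d φ a) (𝓝[>] (0 : ℝ))
      (𝓝 (∫ x : Pt d, phiMinus φ ‖x‖)) := by
  set p : ℝ := d + ε₀
  have hp : 0 ≤ p := by have := hA.eps0_pos; positivity
  obtain ⟨K, hK₀, hK⟩ := hA.exists_phiMinus_le
  set g : Pt d → ℝ := fun x => 2 ^ p * K * (1 + ‖x‖) ^ (-p)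
  have hg : Integrable g := (integrable_one_add_norm (by simpa [p] using hA.eps0_pos)).const_mul _
  have hbound : ∀ x : Pt d, ∀ t, 0 ≤ t → |t - ‖x‖| ≤ 1 → phiMinus φ t ≤ g x := fun x t ht htx =>
    calc phiMinus φ t ≤ K * (1 + t) ^ (-p) := hK t ht
      _ ≤ K * (2 ^ p * (1 + ‖x‖) ^ (-p)) := by
          gcongr
          refine rpow_neg_le_mul_rpow_neg (by positivity) two_pos ?_ hp
          linarith [(abs_le.1 htx).1]
      _ = g x := by ring
  have husc : UpperSemicontinuous fun x : Pt d => phiMinus φ ‖x‖ :=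
    upperSemicontinuousOn_univ_iff.1 <| hA.upperSemicontinuousOn_phiMinus.comp
      continuous_norm.continuousOn fun x _ => norm_nonneg x
  have hint : Integrable fun x : Pt d => phiMinus φ ‖x‖ :=
    hg.mono' husc.measurable.aestronglyMeasurable <| ae_of_all _ fun x => by
      rw [Real.norm_of_nonneg (phiMinus_nonneg φ _)]
      exact hbound x _ (norm_nonneg x) (by simp)
  refine ⟨hint, ?_⟩
  have hlim := tendsto_lintegral_filter_of_dominated_convergence (fun x => ENNReal.ofReal (g x))
    (Eventually.of_forall (measurable_v0Step d φ))
    (by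
      filter_upwards [self_mem_nhdsWithin, eventually_mul_lt_nhdsGT (2 * √d) one_pos] with a (ha : 0 < a) ha₁
      exact ae_of_all _ fun x =>
        v0Step_le_ofReal ha fun t ht htx => hbound x t ht (htx.trans ha₁.le))
    hg.lintegral_lt_top.ne
    (ae_of_all _ fun x => tendsto_v0Step (hA.upperSemicontinuousOn_phiMinus _ (norm_nonneg x)))
  rw [integral_eq_lintegral_of_nonneg_ae (ae_of_all _ fun x => phiMinus_nonneg φ _)
    hint.aestronglyMeasurable]
  refine ((ENNReal.tendsto_toReal hint.lintegral_lt_top.ne).comp hlim).congr' ?_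
  filter_upwards [self_mem_nhdsWithin] with a (ha : 0 < a)
  simp [lintegral_v0Step ha, v0Val, pow_nonneg ha.le]

/-- Under Assumption (A), `∫_{ℝ^d} φ⁻(|x|) dx < ∞` and
`lim_{a→0⁺} a^d · v₀(a) = ∫_{ℝ^d} φ⁻(|x|) dx`. -/
theorem v0_asymptotics (d : ℕ) (hd : 1 ≤ d) (φ : ℝ → ℝ)
    (r₀ R φ₀ φ₁ ε₀ s : ℝ) (hA : AssumptionA d φ r₀ R φ₀ φ₁ ε₀ s) :
    Integrable (fun x : Pt d => phiMinus φ ‖x‖) ∧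
    Tendsto (fun a : ℝ => a ^ d * v0Val d φ a) (𝓝[>] (0 : ℝ))
      (𝓝 (∫ x : Pt d, phiMinus φ ‖x‖)) :=
  v0_asymptotics_general d φ r₀ R φ₀ φ₁ ε₀ s hA
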